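/- arXiv:2212.05192 — 3 statements merged into one kernel-verified Lean document; each statement's English description precedes it below -/
import Mathlib

section
/- Let V be a finite set, L ⊆ V nonempty, and d : V → ℝ a function. Define, for S ⊆ V, D(S) = min over j ∈ S ∪ L of d(j). Let f : ℝ → ℝ be monotonically decreasing (antitone). Then the set function S ↦ f(D(S)) is submodular: for all S ⊆ T ⊆ V and e ∈ V \ T, f(D(S ∪ {e})) − f(D(S)) ≥ f(D(T ∪ {e})) − f(D(T)). -/
/-- `S ↦ f(D(S))` is submodular when `f` is antitone and
`D(S) = min_{j ∈ S ∪ L} d(j)`. -/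
theorem stmt_1 {V : Type*} [Fintype V] [DecidableEq V]
    (L : Finset V) (hL : L.Nonempty) (d : V → ℝ)
    (f : ℝ → ℝ) (hf : Antitone f)
    (D : Finset V → ℝ)
    (hD : ∀ S : Finset V, D S = (S ∪ L).inf' (hL.mono Finset.subset_union_right) d) :
    ∀ S T : Finset V, S ⊆ T → ∀ e ∈ (Finset.univ : Finset V) \ T,
      f (D (insert e T)) - f (D T) ≤ f (D (insert e S)) - f (D S) := by
  intro S T hST e _
  have key : ∀ X : Finset V, D (insert e X) = min (d e) (D X) := by
    intro X
    rw [hD, hD]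
    simp only [Finset.insert_union]
    exact Finset.inf'_insert _ _
  have hba : D T ≤ D S := by
    rw [hD, hD]
    exact Finset.inf'_mono d (Finset.union_subset_union_left hST) _
  rw [key, key]
  rcases le_or_gt (D T) (d e) with h | h
  · rw [min_eq_right h]
    have : f (D S) ≤ f (min (d e) (D S)) := hf (min_le_right _ _)
    linarith
  · rw [min_eq_left h.le, min_eq_left (h.le.trans hba)]
    have := hf hba
    linarith
end

section
/- There exists a set function that is NOT submodular, arising from depth-of-choice: define on ground set V = {1,...,7} with singleton resident, objective G(S) = f(Σ_{p=1}^{10} w_p · D_p(S)) where D_p(S) is the p-th smallest element of the multiset {d(j) : j ∈ S} ∪ {2000 repeated 8 times} (existing amenities at distance 2000), d(j) = 1800 for j ∈ {1,...,6} and d(7) = 1, weights w = (0.11, 0.06, 0.04, 0.04, 0.03, 0.03, 0.03, 0.03, 0.03, 0.03) plus fixed terms 0.43·2000 + 0.14·2000 added inside f, and f the piecewise-linear WalkScore through (0,100),(400,95),(1800,10),(2400,0). Then with S = {1,2,3,4}, T = {1,2,3,4,5,6}, e = 7, one has G(S ∪ {e}) − G(S) < G(T ∪ {e}) − G(T), violating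 submodularity. -/
/-- The piecewise-linear WalkScore function through the breakpoints
`(0,100), (400,95), (1800,10), (2400,0)`, equal to `0` beyond `2400`. -/
noncomputable def walkScore (x : ℝ) : ℝ :=
  if x ≤ 400 then 100 - (5 / 400) * x
  else if x ≤ 1800 then 95 - (85 / 1400) * (x - 400)
  else if x ≤ 2400 then 10 - (10 / 600) * (x - 1800)
  else 0

/-- `orderStat m p` is the `p`-th smallest element (0-indexed, counting multiplicity)
of the finite multiset `m` of reals. -/
noncomputable def orderStat (m : Multiset ℝ) (p : ℕ) : ℝ := (m.sort (· ≤ ·)).getD p 0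

/-- Distances of the 7 candidate locations to the single resident:
locations 1–6 at 1800 m, location 7 at 1 m. -/
noncomputable def distCE : Fin 7 → ℝ := fun j => if j = 6 then 1 else 1800

/-- Combined multiset of allocated distances and the 8 existing-amenity
distances (all 2000 m, accounting for 6 restaurants, 1 grocery, 1 school;
the grocery/school terms enter as fixed 2000 m contributions). -/
noncomputable def MsetCE (S : Finset (Fin 7)) : Multiset ℝ :=
  S.val.map distCE + Multiset.replicate 8 2000

/-- Restaurant depth-of-choice weights (normalized, 10 nearest options). -/
noncomputable def wCE : Fin 10 → ℝ :=
  ![0.11, 0.06, 0.04, 0.04, 0.03, 0.03, 0.03, 0.03, 0.03, 0.03]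

/-- Depth-of-choice weighted distance: fixed grocery (0.43) and school (0.14)
terms at 2000 m plus the weighted order statistics of the restaurant distances. -/
noncomputable def lCE (S : Finset (Fin 7)) : ℝ :=
  0.43 * 2000 + 0.14 * 2000 + ∑ p : Fin 10, wCE p * orderStat (MsetCE S) p.val

/-- Depth-of-choice objective for the single resident. -/
noncomputable def GCE (S : Finset (Fin 7)) : ℝ := walkScore (lCE S)

/-! Adding location 7 (at distance 1) makes it the nearest option and pushes every other distance
one rank down, which lowers the weighted distance by the same `203.89` from `S` and from `T`:
`1950 ↦ 1746.11` and `1938 ↦ 1734.11`. Both moves cross the kink of the WalkScore at `1800`,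
where it is steeper on the left (slope `-85/1400`) than on the right (slope `-1/60`). Since
`l(T)` lies `12` below `l(S)`, the move from `T` trades `12` units of the flat part for `12`
units of the steep part, so it gains more. -/

lemma orderStat_eq_getD {m : Multiset ℝ} {L : List ℝ} (hL : L.Pairwise (· ≤ ·))
    (hm : m = L) (p : ℕ) : orderStat m p = L.getD p 0 := by
  rw [orderStat, hm, Multiset.coe_sort, List.mergeSort_eq_self (r := (· ≤ ·)) hL]

lemma pairwise_le_replicate_append_replicate {x y : ℝ} (hxy : x ≤ y) (a b : ℕ) :
    (List.replicate a x ++ List.replicate b y).Pairwise (· ≤ ·) := by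
  simp [List.pairwise_append, List.pairwise_replicate, List.mem_replicate, hxy]

lemma MsetCE_eq_coe {S : Finset (Fin 7)} (hS : 6 ∉ S) :
    MsetCE S = ((List.replicate S.card 1800 ++ List.replicate 8 2000 : List ℝ) : Multiset ℝ) := by
  have hdist : S.val.map distCE = Multiset.replicate S.card 1800 := by
    refine Multiset.eq_replicate.mpr ⟨Multiset.card_map _ _, fun d hd => ?_⟩
    obtain ⟨j, hj, rfl⟩ := Multiset.mem_map.mp hd
    exact if_neg (ne_of_mem_of_not_mem hj hS)
  rw [MsetCE, hdist, ← Multiset.coe_add, Multiset.coe_replicate, Multiset.coe_replicate]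

lemma MsetCE_insert_six {S : Finset (Fin 7)} (hS : 6 ∉ S) :
    MsetCE (insert 6 S) = 1 ::ₘ MsetCE S := by
  rw [MsetCE, MsetCE, Finset.insert_val_of_notMem hS, Multiset.map_cons, Multiset.cons_add]
  rfl

lemma lCE_eq_of_MsetCE_eq {S : Finset (Fin 7)} {L : List ℝ} (hL : L.Pairwise (· ≤ ·))
    (hS : MsetCE S = L) : lCE S = 1140 + ∑ p : Fin 10, wCE p * L.getD p 0 := by
  simp only [lCE, orderStat_eq_getD hL hS]
  norm_num

lemma lCE_of_six_notMem {S : Finset (Fin 7)} (hS : 6 ∉ S) :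
    lCE S = 1140 + ∑ p : Fin 10,
      wCE p * (List.replicate S.card (1800 : ℝ) ++ List.replicate 8 2000).getD p 0 :=
  lCE_eq_of_MsetCE_eq (pairwise_le_replicate_append_replicate (by norm_num) _ _)
    (MsetCE_eq_coe hS)

lemma lCE_insert_six {S : Finset (Fin 7)} (hS : 6 ∉ S) :
    lCE (insert 6 S) = 1140 + ∑ p : Fin 10,
      wCE p * ((1 : ℝ) :: (List.replicate S.card 1800 ++ List.replicate 8 2000)).getD p 0 := by
  have hsorted := pairwise_le_replicate_append_replicate (by norm_num : (1800 : ℝ) ≤ 2000)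
    S.card 8
  refine lCE_eq_of_MsetCE_eq (List.pairwise_cons.mpr ⟨fun d hd => ?_, hsorted⟩)
    (by rw [MsetCE_insert_six hS, MsetCE_eq_coe hS, Multiset.cons_coe])
  rcases List.mem_append.mp hd with hd | hd <;> linarith [List.eq_of_mem_replicate hd]

-- Locations `1, …, 7` of the informal statement are `0, …, 6` here.
/-- with `S = {1,2,3,4}`, `T = {1,2,3,4,5,6}` and `e = 7`
(0-indexed below), the depth-of-choice objective violates submodularity:
the marginal gain of `e` at the smaller set is strictly less than at the larger set. -/
theorem stmt_10 :
    let S : Finset (Fin 7) := {0, 1, 2, 3}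
    let T : Finset (Fin 7) := {0, 1, 2, 3, 4, 5}
    let e : Fin 7 := 6
    S ⊆ T ∧ e ∉ T ∧
      GCE (insert e S) - GCE S < GCE (insert e T) - GCE T := by
  intro S T e
  have hS : 6 ∉ S := by decide
  have hT : 6 ∉ T := by decide
  have lS : lCE S = 1950 := by
    rw [lCE_of_six_notMem hS, show S.card = 4 from rfl]
    norm_num [Fin.sum_univ_succ, wCE]
  have lSe : lCE (insert e S) = 1746.11 := by
    rw [lCE_insert_six hS, show S.card = 4 from rfl]
    norm_num [Fin.sum_univ_succ, wCE]
  have lT : lCE T = 1938 := by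
    rw [lCE_of_six_notMem hT, show T.card = 6 from rfl]
    norm_num [Fin.sum_univ_succ, wCE]
  have lTe : lCE (insert e T) = 1734.11 := by
    rw [lCE_insert_six hT, show T.card = 6 from rfl]
    norm_num [Fin.sum_univ_succ, wCE]
  refine ⟨by decide, hT, ?_⟩
  rw [GCE, GCE, GCE, GCE, lS, lSe, lT, lTe]
  norm_num [walkScore]
end

section
/- Let d : V → ℝ on finite V, L ⊆ V nonempty, S ⊆ T ⊆ V, e ∈ V, and write D_S = min_{j ∈ S ∪ L} d(j), D_T = min_{j ∈ T ∪ L} d(j), m = d(e). For any antitone f and any constant u, the difference of marginal gains Δ = [f(min(m, D_S) + u) − f(D_S + u)] − [f(min(m, D_T) + u) − f(D_T + u)] is nonnegative. -/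
/-- Below `m` the gain `f (min m t) - f t` vanishes; above `m` it is `f m - f t`, which grows with
`t` since `f` is antitone. -/
theorem Antitone.monotone_apply_min_sub {α β : Type*} [LinearOrder α] [AddCommGroup β]
    [PartialOrder β] [IsOrderedAddMonoid β] {f : α → β} (hf : Antitone f) (m : α) :
    Monotone fun t => f (min m t) - f t := by
  intro s t hst
  dsimp only
  rcases le_total s m with hsm | hms
  · have hs : f (min m s) - f s = 0 := by rw [min_eq_right hsm, sub_self]
    rw [hs, sub_nonneg]
    exact hf (min_le_right m t)
  · rw [min_eq_left hms, min_eq_left (hms.trans hst)]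
    exact sub_le_sub_left (hf hst) _

theorem stmt_19_general {V : Type*} [DecidableEq V]
    (d : V → ℝ) (L : Finset V) (hL : L.Nonempty)
    (S T : Finset V) (hST : S ⊆ T)
    (f : ℝ → ℝ) (hf : Antitone f) (u : ℝ)
    (DS DT m : ℝ)
    (hDS : DS = (S ∪ L).inf' (hL.mono Finset.subset_union_right) d)
    (hDT : DT = (T ∪ L).inf' (hL.mono Finset.subset_union_right) d) :
    0 ≤ (f (min m DS + u) - f (DS + u)) - (f (min m DT + u) - f (DT + u)) := by
  have hDT_le_DS : DT ≤ DS := by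
    rw [hDS, hDT]
    exact Finset.inf'_mono d (Finset.union_subset_union_left hST) _
  have hf_shift : Antitone fun x => f (x + u) := hf.comp_monotone (monotone_id.add_const u)
  have hgain := hf_shift.monotone_apply_min_sub m hDT_le_DS
  exact sub_nonneg.mpr hgain

/-- shifted scalar core of the multi-amenity-type submodularity proof:
with `D_S = min_{j ∈ S ∪ L} d j`, `D_T = min_{j ∈ T ∪ L} d j`, `m = d e`, `f` antitone
and `u` any constant shift, the difference of marginal gains is nonnegative. -/
theorem stmt_19 {V : Type*} [Fintype V] [DecidableEq V]
    (d : V → ℝ) (L : Finset V) (hL : L.Nonempty)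
    (S T : Finset V) (hST : S ⊆ T) (e : V)
    (f : ℝ → ℝ) (hf : Antitone f) (u : ℝ)
    (DS DT m : ℝ)
    (hDS : DS = (S ∪ L).inf' (hL.mono Finset.subset_union_right) d)
    (hDT : DT = (T ∪ L).inf' (hL.mono Finset.subset_union_right) d)
    (hm : m = d e) :
    0 ≤ (f (min m DS + u) - f (DS + u)) - (f (min m DT + u) - f (DT + u)) :=
  stmt_19_general d L hL S T hST f hf u DS DT m hDS hDT
end
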